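/- (Lemma 13: Morita equivalence of H_κ with its spherical subalgebra.) Set κ_l = 0 and assume that κ_i − κ_j ≠ (j−i)/l for all integers 0 < i < j ≤ l (equivalently, c_i + c_{i+1} + ⋯ + c_{j−1} ≠ 0 for 0 < i < j ≤ l, where c_i = κ_i − κ_{i+1} − 1/l + δ_{i,0}). Then e_0 H_κ e_0 is a ring with multiplicative identity e_0, and the functor M ↦ e_0·M from the category of left H_κ-modules to the category of left e_0 H_κ e_0-modules is an equivalence of categories; in particular the rings H_κ and e_0 H_κ e_0 are Morita equivalent. -/

import Mathlib

/-!
If `ε` is an idempotent of a ring `A` with `A ε A = A`, write `1 = ∑ₖ aₖ ε bₖ`. Then every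
element `m` of an `A`-module is recovered from the elements `ε r m ∈ ε M`, which makes
`M ↦ ε M` faithful and full, and `N ≅ ε Hom_{εAε}(εA, N)` makes it essentially surjective.

For `ε = e₀ ∈ H_κ`, the element `zⁱ e₀ ∂ⁱ` (resp. `∂^{l-i} e₀ z^{l-i}`) of `H_κ e₀ H_κ` acts on
the monomials `zⁿ`, `n ≡ i (mod l)`, by `p(n)` (resp. `q(n)`) and kills the others, where `p`
and `q` are products of linear factors whose roots are disjoint exactly under the hypothesis
on `κ`. Since the Euler operator `z d/dz` lies in `H_κ`, a Bézout identity `u p + v q = 1`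
puts `eᵢ` into `H_κ e₀ H_κ`, hence also `1 = ∑ᵢ eᵢ`.
-/

open CategoryTheory

section Corner

variable {A : Type*} [Ring A]

/-- The corner set `ε A ε = {ε r ε : r ∈ A}` of a ring `A` at an element `ε`,
as a non-unital subring. -/
def cornerSubring (ε : A) : NonUnitalSubring A where
  carrier := {w | ∃ r : A, w = ε * r * ε}
  zero_mem' := ⟨0, by simp⟩
  add_mem' := by
    rintro a b ⟨r, rfl⟩ ⟨s, rfl⟩
    exact ⟨r + s, by rw [mul_add, add_mul]⟩
  neg_mem' := by
    rintro a ⟨r, rfl⟩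
    exact ⟨-r, by simp⟩
  mul_mem' := by
    rintro a b ⟨r, rfl⟩ ⟨s, rfl⟩
    exact ⟨r * ε * ε * s, by noncomm_ring⟩

/-- If `ε` is an idempotent, the corner `ε A ε` is a unital ring
with multiplicative identity `ε`. -/
instance cornerRing (ε : A) [hε : Fact (IsIdempotentElem ε)] :
    Ring ↥(cornerSubring ε) :=
  { (inferInstance : NonUnitalRing ↥(cornerSubring ε)) with
    one := ⟨ε, ε, by rw [hε.out, hε.out]⟩
    one_mul := fun a => Subtype.ext (show ε * (a : A) = (a : A) by
      obtain ⟨r, hr⟩ := a.2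
      rw [hr, ← mul_assoc, ← mul_assoc, hε.out])
    mul_one := fun a => Subtype.ext (show (a : A) * ε = (a : A) by
      obtain ⟨r, hr⟩ := a.2
      rw [hr, mul_assoc, hε.out]) }

end Corner

section CornerModule

variable {A : Type*} [Ring A] (ε : A)
variable (M : Type*) [AddCommGroup M] [Module A M]

/-- For a left `A`-module `M`, the subgroup `ε M = {ε m : m ∈ M}`. -/
def cornerSubgroup : AddSubgroup M :=
  (DistribMulAction.toAddMonoidHom M ε).range

instance cornerSMul : SMul ↥(cornerSubring ε) ↥(cornerSubgroup ε M) :=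
  ⟨fun s m => ⟨(s : A) • (m : M), by
    obtain ⟨r, hr⟩ := s.2
    exact ⟨(r * ε) • (m : M), by
      show ε • (r * ε) • (m : M) = (s : A) • (m : M)
      rw [smul_smul, hr, mul_assoc]⟩⟩⟩

@[simp] lemma corner_smul_coe (s : ↥(cornerSubring ε)) (m : ↥(cornerSubgroup ε M)) :
    ((s • m : ↥(cornerSubgroup ε M)) : M) = (s : A) • (m : M) := rfl

/-- `ε M` is a module over the corner ring `ε A ε`. -/
instance cornerModule [hε : Fact (IsIdempotentElem ε)] :
    Module ↥(cornerSubring ε) ↥(cornerSubgroup ε M) where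
  one_smul m := Subtype.ext (by
    obtain ⟨m', hm'⟩ := m.2
    show (((1 : ↥(cornerSubring ε)) : A)) • (m : M) = (m : M)
    have h1 : ((1 : ↥(cornerSubring ε)) : A) = ε := rfl
    rw [h1, ← hm']
    show ε • ε • m' = ε • m'
    rw [smul_smul, hε.out])
  mul_smul s t m := Subtype.ext (by
    show ((s * t : ↥(cornerSubring ε)) : A) • (m : M) = (s : A) • (t : A) • (m : M)
    rw [show ((s * t : ↥(cornerSubring ε)) : A) = (s : A) * (t : A) from rfl, mul_smul])
  smul_zero s := Subtype.ext (by
    show (s : A) • ((0 : ↥(cornerSubgroup ε M)) : M) = 0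
    simp)
  smul_add s m n := Subtype.ext (by
    show (s : A) • ((m : M) + (n : M)) = (s : A) • (m : M) + (s : A) • (n : M)
    rw [smul_add])
  add_smul s t m := Subtype.ext (by
    show ((s + t : ↥(cornerSubring ε)) : A) • (m : M) = (s : A) • (m : M) + (t : A) • (m : M)
    rw [show ((s + t : ↥(cornerSubring ε)) : A) = (s : A) + (t : A) from rfl, add_smul])
  zero_smul m := Subtype.ext (by
    show ((0 : ↥(cornerSubring ε)) : A) • (m : M) = 0
    simp)

end CornerModule

section CornerFunctor

universe v u

variable {A : Type u} [Ring A]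

/-- The functor `M ↦ ε M` from the category of left `A`-modules to the category of left
modules over the corner ring `ε A ε` of an idempotent `ε`. -/
noncomputable def cornerFunctor (ε : A) [hε : Fact (IsIdempotentElem ε)] :
    ModuleCat.{v} A ⥤ ModuleCat.{v} ↥(cornerSubring ε) where
  obj M := ModuleCat.of ↥(cornerSubring ε) ↥(cornerSubgroup ε M)
  map {M N} f := ModuleCat.ofHom <|
    { toFun := fun m => ⟨f m.1, by
        obtain ⟨m', hm'⟩ := m.2
        exact ⟨f m', by
          show ε • f m' = f m.1
          rw [← map_smul f.hom, ← hm']; rfl⟩⟩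
      map_add' := fun m n => Subtype.ext (by
        show f (m.1 + n.1) = f m.1 + f n.1
        rw [map_add])
      map_smul' := fun s m => Subtype.ext (by
        show f ((s : A) • m.1) = (s : A) • f m.1
        rw [map_smul f.hom]) }
  map_id M := by ext m; rfl
  map_comp f g := by ext m; rfl

end CornerFunctor

open LaurentPolynomial

noncomputable section

/-- The ℂ-algebra `L = ℂ[z, z⁻¹]` of Laurent polynomials (`T n` is the monomial `zⁿ`). -/
abbrev Lau : Type := LaurentPolynomial ℂ

/-- Multiplication by `z`, as a ℂ-linear endomorphism of `L`. -/
def Zmul : Module.End ℂ Lau := LinearMap.mulLeft ℂ (T 1)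

/-- Multiplication by `z⁻¹`, as a ℂ-linear endomorphism of `L`. -/
def Zinv : Module.End ℂ Lau := LinearMap.mulLeft ℂ (T (-1))

/-- The ℂ-algebra automorphism `Γ` of `L` determined by `Γ(z) = ζ⁻¹ z`,
i.e. `Γ(zⁿ) = ζ⁻ⁿ zⁿ`. -/
def Gam (ζ : ℂ) : Module.End ℂ Lau :=
  (Finsupp.lsum ℂ fun (n : ℤ) => LinearMap.toSpanSingleton ℂ Lau ((ζ⁻¹ ^ n) • T n)) ∘ₗ
    (AddMonoidAlgebra.coeffLinearEquiv ℂ).toLinearMap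

/-- The formal derivative `d/dz : zⁿ ↦ n zⁿ⁻¹` on `L`. -/
def Deriv : Module.End ℂ Lau :=
  (Finsupp.lsum ℂ fun (n : ℤ) => LinearMap.toSpanSingleton ℂ Lau ((n : ℂ) • T (n - 1))) ∘ₗ
    (AddMonoidAlgebra.coeffLinearEquiv ℂ).toLinearMap

/-- The idempotent `e_i = (1/l)·Σ_{j=0}^{l−1} ζ^{ij} Γ^j` of `ℂ(ℤ/lℤ)`, regarded as an
endomorphism of `L`. -/
def eIdem (l : ℕ) (ζ : ℂ) (i : Fin l) : Module.End ℂ Lau :=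
  (l : ℂ)⁻¹ • ∑ j ∈ Finset.range l, (ζ ^ ((i : ℕ) * j)) • (Gam ζ) ^ j

/-- The Dunkl operator `∂_κ = d/dz + l z⁻¹ Σ_{i=0}^{l−1} κ_i e_i` (where `κ_0 = 0`). -/
def Dunkl (l : ℕ) (ζ : ℂ) (κ : Fin l → ℂ) : Module.End ℂ Lau :=
  Deriv + (l : ℂ) • (Zinv * ∑ i : Fin l, κ i • eIdem l ζ i)

/-- The rational Cherednik algebra `H_κ` of type `ℤ/lℤ`: the unital ℂ-subalgebra of
`End_ℂ(L)` generated by `Z`, `Γ` and `∂_κ`. -/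
def Cher (l : ℕ) (ζ : ℂ) (κ : Fin l → ℂ) : Subalgebra ℂ (Module.End ℂ Lau) :=
  Algebra.adjoin ℂ {Zmul, Gam ζ, Dunkl l ζ κ}

section CornerEquivalence

universe u v

variable {A : Type u} [Ring A] (ε : A)

def cornerElem (r : A) : ↥(cornerSubring ε) := ⟨ε * r * ε, r, rfl⟩

lemma exists_sum_mul_mul_eq_of_mem_span_singleton {x : A} (hx : x ∈ TwoSidedIdeal.span {ε}) :
    ∃ (n : ℕ) (a b : Fin n → A), ∑ k, a k * ε * b k = x := by
  induction hx using TwoSidedIdeal.span_induction with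
  | mem x hx => exact ⟨1, 1, 1, by simp [Set.mem_singleton_iff.1 hx]⟩
  | zero => exact ⟨0, 0, 0, by simp⟩
  | add x y _ _ hx hy =>
    obtain ⟨n, a, b, rfl⟩ := hx
    obtain ⟨n', a', b', rfl⟩ := hy
    exact ⟨n + n', Fin.append a a', Fin.append b b', by simp [Fin.sum_univ_add]⟩
  | neg x _ hx =>
    obtain ⟨n, a, b, rfl⟩ := hx
    exact ⟨n, -a, b, by simp⟩
  | left_absorb c x _ hx =>
    obtain ⟨n, a, b, rfl⟩ := hx
    exact ⟨n, fun k => c * a k, b, by simp [Finset.mul_sum, mul_assoc]⟩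
  | right_absorb c x _ hx =>
    obtain ⟨n, a, b, rfl⟩ := hx
    exact ⟨n, a, fun k => b k * c, by simp [Finset.sum_mul, mul_assoc]⟩

variable {M : Type*} [AddCommGroup M] [Module A M]

def cornerProj : M →+ ↥(cornerSubgroup ε M) :=
  (DistribSMul.toAddMonoidHom M ε).rangeRestrict

@[simp] lemma coe_cornerProj (m : M) : (cornerProj ε m : M) = ε • m := rfl

section

variable {ε} {ι : Type*} [Fintype ι] {a b : ι → A}

lemma sum_smul_cornerProj (hab : ∑ k, a k * ε * b k = 1) (m : M) :
    ∑ k, a k • (cornerProj ε (b k • m) : M) = m := by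
  simp only [coe_cornerProj, ← mul_smul, ← mul_assoc, ← Finset.sum_smul, hab, one_smul]

lemma eq_of_forall_cornerProj_smul_eq (hab : ∑ k, a k * ε * b k = 1) {m m' : M}
    (h : ∀ r : A, cornerProj ε (r • m) = cornerProj ε (r • m')) : m = m' := by
  rw [← sum_smul_cornerProj hab m, ← sum_smul_cornerProj hab m']
  simp only [h]

end

variable [hε : Fact (IsIdempotentElem ε)]

lemma idem_smul_coe_cornerSubgroup (x : ↥(cornerSubgroup ε M)) : ε • (x : M) = x := by
  obtain ⟨m, hm⟩ := x.2
  rw [← hm]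
  exact (mul_smul ε ε m).symm.trans (congrArg (· • m) hε.out)

lemma cornerProj_smul_coe (r : A) (x : ↥(cornerSubgroup ε M)) :
    cornerProj ε (r • (x : M)) = cornerElem ε r • x := by
  ext
  simp only [coe_cornerProj, corner_smul_coe, cornerElem, mul_smul,
    idem_smul_coe_cornerSubgroup]

@[simp] lemma coe_cornerFunctor_map_apply {M N : ModuleCat.{v} A} (f : M ⟶ N)
    (x : ↥(cornerSubgroup ε M)) :
    (((cornerFunctor ε).map f).hom x).1 = f.hom x := rfl

variable {ε} {ι : Type*} [Fintype ι] {a b : ι → A}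

theorem cornerFunctor_faithful (hab : ∑ k, a k * ε * b k = 1) :
    (cornerFunctor.{v} ε).Faithful where
  map_injective {M N} f g hfg := by
    ext m
    refine eq_of_forall_cornerProj_smul_eq hab fun r => ?_
    have := congrArg (fun φ => (φ.hom (cornerProj ε (r • m))).1) hfg
    ext
    simpa only [coe_cornerFunctor_map_apply, coe_cornerProj, map_smul] using this

variable {N : Type*} [AddCommGroup N] [Module A N]

/-- When `∑ₖ aₖ ε bₖ = 1`, this is the `A`-linear extension of `φ`. -/
def cornerLift (a b : ι → A)
    (φ : ↥(cornerSubgroup ε M) →ₗ[↥(cornerSubring ε)] ↥(cornerSubgroup ε N)) : M →+ N :=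
  AddMonoidHom.mk' (fun m => ∑ k, a k • (φ (cornerProj ε (b k • m)) : N)) fun m m' => by
    simp only [smul_add, map_add, AddSubgroup.coe_add, Finset.sum_add_distrib]

lemma cornerProj_smul_cornerLift (hab : ∑ k, a k * ε * b k = 1)
    (φ : ↥(cornerSubgroup ε M) →ₗ[↥(cornerSubring ε)] ↥(cornerSubgroup ε N)) (r : A) (m : M) :
    cornerProj ε (r • cornerLift a b φ m) = φ (cornerProj ε (r • m)) := by
  calc cornerProj ε (r • cornerLift a b φ m)
      = ∑ k, cornerElem ε (r * a k) • φ (cornerProj ε (b k • m)) := by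
        simp only [cornerLift, AddMonoidHom.mk'_apply, Finset.smul_sum, smul_smul, map_sum,
          cornerProj_smul_coe]
    _ = φ (cornerProj ε (r • ∑ k, a k • (cornerProj ε (b k • m) : M))) := by
        simp only [Finset.smul_sum, smul_smul, map_sum, cornerProj_smul_coe, map_smul]
    _ = φ (cornerProj ε (r • m)) := by rw [sum_smul_cornerProj hab]

theorem cornerFunctor_full (hab : ∑ k, a k * ε * b k = 1) : (cornerFunctor.{v} ε).Full where
  map_surjective {M N} φ := by
    let φ' : ↥(cornerSubgroup ε M) →ₗ[↥(cornerSubring ε)] ↥(cornerSubgroup ε N) := φ.hom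
    refine ⟨ModuleCat.ofHom { cornerLift a b φ' with map_smul' := fun c m => ?_ }, ?_⟩
    · refine eq_of_forall_cornerProj_smul_eq hab fun r => ?_
      change cornerProj ε (r • cornerLift a b φ' (c • m)) =
        cornerProj ε (r • c • cornerLift a b φ' m)
      rw [smul_smul, cornerProj_smul_cornerLift hab, cornerProj_smul_cornerLift hab, smul_smul]
    · refine ModuleCat.hom_ext (LinearMap.ext fun (x : ↥(cornerSubgroup ε M)) => Subtype.ext ?_)
      change cornerLift a b φ' x.1 = (φ' x).1
      refine eq_of_forall_cornerProj_smul_eq hab fun r => ?_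
      rw [cornerProj_smul_cornerLift hab, cornerProj_smul_coe, map_smul, cornerProj_smul_coe]

variable (ε)

def cornerMulRight (c : A) :
    ↥(cornerSubgroup ε A) →ₗ[↥(cornerSubring ε)] ↥(cornerSubgroup ε A) where
  toFun x := ⟨x * c, by
    obtain ⟨y, hy⟩ := x.2
    exact ⟨y * c, by rw [← hy]; exact (mul_assoc ε y c).symm⟩⟩
  map_add' x y := Subtype.ext (add_mul _ _ c)
  map_smul' s x := Subtype.ext (mul_assoc (s : A) x c)

def cornerMulIdem : ↥(cornerSubgroup ε A) →ₗ[↥(cornerSubring ε)] ↥(cornerSubring ε) where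
  toFun x := ⟨x * ε, by
    obtain ⟨y, hy⟩ := x.2
    exact ⟨y, by rw [← hy]; rfl⟩⟩
  map_add' x y := Subtype.ext (add_mul _ _ ε)
  map_smul' s x := Subtype.ext (mul_assoc (s : A) x ε)

abbrev cornerHomModule (N : Type*) [AddCommGroup N] [Module ↥(cornerSubring ε) N] :
    Module A (↥(cornerSubgroup ε A) →ₗ[↥(cornerSubring ε)] N) where
  smul c f := f ∘ₗ cornerMulRight ε c
  one_smul f := LinearMap.ext fun x => congrArg f (Subtype.ext (mul_one (x : A)))
  mul_smul c c' f := LinearMap.ext fun x => congrArg f (Subtype.ext (mul_assoc (x : A) c c').symm)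
  smul_zero c := rfl
  smul_add c f g := rfl
  add_smul c c' f := LinearMap.ext fun x => by
    change f (cornerMulRight ε (c + c') x) = f (cornerMulRight ε c x) + f (cornerMulRight ε c' x)
    rw [← map_add]
    exact congrArg f (Subtype.ext (mul_add (x : A) c c'))
  zero_smul f := LinearMap.ext fun x => by
    change f (cornerMulRight ε 0 x) = 0
    rw [← map_zero f]
    exact congrArg f (Subtype.ext (mul_zero (x : A)))

/-- `ε A` is a generator: every corner module `N` is `ε Hom_{εAε}(εA, N)`, with `g ↦ g ε`. -/
theorem cornerFunctor_essSurj : (cornerFunctor.{max u v} ε).EssSurj where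
  mem_essImage N := by
    let H := ↥(cornerSubgroup ε A) →ₗ[↥(cornerSubring ε)] N
    let _ := cornerHomModule ε N
    let e : ↥(cornerSubgroup ε A) := cornerProj ε 1
    have smul_apply (c : A) (f : H) (x) : (c • f) x = f (cornerMulRight ε c x) := rfl
    have mulRight_e (s : ↥(cornerSubring ε)) : cornerMulRight ε s e = s • e := by
      obtain ⟨r, hr⟩ := s.2
      ext
      change ε * 1 * s = s * (ε * 1)
      rw [hr, mul_one, ← mul_assoc, ← mul_assoc, hε.out.eq, mul_assoc _ ε ε, hε.out.eq]
    have mulIdem_e : cornerMulIdem ε e = 1 :=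
      Subtype.ext (show ε * 1 * ε = ε by rw [mul_one, hε.out.eq])
    have mulIdem_smul_e (x) : cornerMulIdem ε x • e = cornerMulRight ε ε x :=
      Subtype.ext (show (x : A) * ε * (ε * 1) = x * ε by rw [mul_one, mul_assoc, hε.out])
    have smulRight_mem (n : N) : (cornerMulIdem ε).smulRight n ∈ cornerSubgroup ε H := by
      refine ⟨(cornerMulIdem ε).smulRight n, LinearMap.ext fun x => ?_⟩
      change cornerMulIdem ε (cornerMulRight ε ε x) • n = cornerMulIdem ε x • n
      rw [← mulIdem_smul_e, map_smul, mulIdem_e, smul_eq_mul, mul_one]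
    let Φ : ↥(cornerSubgroup ε H) ≃ₗ[↥(cornerSubring ε)] N :=
      { toFun g := (g : H) e
        map_add' g g' := rfl
        map_smul' s g := by
          rw [corner_smul_coe, smul_apply, mulRight_e, map_smul]
          rfl
        invFun n := ⟨(cornerMulIdem ε).smulRight n, smulRight_mem n⟩
        left_inv g := Subtype.ext <| LinearMap.ext fun x => by
          rw [LinearMap.smulRight_apply, ← map_smul, mulIdem_smul_e, ← smul_apply,
            idem_smul_coe_cornerSubgroup]
        right_inv n := by
          change cornerMulIdem ε e • n = n
          rw [mulIdem_e, one_smul] }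
    exact ⟨ModuleCat.of A H, ⟨Φ.toModuleIso⟩⟩

theorem cornerFunctor_isEquivalence (h : TwoSidedIdeal.span {ε} = ⊤) :
    (cornerFunctor.{max u v} ε).IsEquivalence := by
  obtain ⟨n, a, b, hab⟩ :=
    exists_sum_mul_mul_eq_of_mem_span_singleton ε ((TwoSidedIdeal.one_mem_iff _).2 h)
  exact { faithful := cornerFunctor_faithful hab
          full := cornerFunctor_full hab
          essSurj := cornerFunctor_essSurj ε }

end CornerEquivalence

lemma LaurentPolynomial.linearMap_ext_T {R M : Type*} [CommSemiring R] [AddCommMonoid M]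
    [Module R M] {f g : R[T;T⁻¹] →ₗ[R] M} (h : ∀ n, f (T n) = g (T n)) : f = g :=
  AddMonoidAlgebra.lhom_ext' fun n => LinearMap.ext fun r => by
    simp only [LinearMap.comp_apply, AddMonoidAlgebra.lsingle_apply]
    rw [single_eq_C_mul_T, ← smul_eq_C_mul, map_smul, map_smul, h]

lemma Zmul_T (n : ℤ) : Zmul (T n) = T (n + 1) := by
  rw [Zmul, LinearMap.mulLeft_apply, ← T_add, add_comm]

lemma Zmul_pow_T (k : ℕ) (n : ℤ) : (Zmul ^ k) (T n) = T (n + k) := by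
  induction k with
  | zero => simp
  | succ k ih =>
    rw [pow_succ', Module.End.mul_apply, ih, Zmul_T, Nat.cast_succ, add_assoc]

lemma Zinv_T (n : ℤ) : Zinv (T n) = T (n - 1) := by
  rw [Zinv, LinearMap.mulLeft_apply, ← T_add, neg_add_eq_sub]

lemma Deriv_T (n : ℤ) : Deriv (T n) = (n : ℂ) • T (n - 1) := by
  change (Finsupp.lsum ℂ fun (n : ℤ) => LinearMap.toSpanSingleton ℂ Lau ((n : ℂ) • T (n - 1)))
    (Finsupp.single n 1) = _
  rw [Finsupp.lsum_single, LinearMap.toSpanSingleton_apply, one_smul]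

lemma Gam_T (ζ : ℂ) (n : ℤ) : Gam ζ (T n) = (ζ⁻¹ ^ n) • T n := by
  change (Finsupp.lsum ℂ fun (n : ℤ) => LinearMap.toSpanSingleton ℂ Lau ((ζ⁻¹ ^ n) • T n))
    (Finsupp.single n 1) = _
  rw [Finsupp.lsum_single, LinearMap.toSpanSingleton_apply, one_smul]

/-- The Euler operator `z d/dz`, in terms of the generators of `H_κ`. -/
def eulerOp (l : ℕ) (ζ : ℂ) (κ : Fin l → ℂ) : Module.End ℂ Lau :=
  Zmul * Dunkl l ζ κ - (l : ℂ) • ∑ i, κ i • eIdem l ζ i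

section CherednikGenerators

variable {l : ℕ} (ζ : ℂ) (κ : Fin l → ℂ)

lemma Zmul_mem_Cher : Zmul ∈ Cher l ζ κ :=
  Algebra.subset_adjoin (Set.mem_insert _ _)

lemma Gam_mem_Cher : Gam ζ ∈ Cher l ζ κ :=
  Algebra.subset_adjoin (Set.mem_insert_of_mem _ (Set.mem_insert _ _))

lemma Dunkl_mem_Cher : Dunkl l ζ κ ∈ Cher l ζ κ :=
  Algebra.subset_adjoin (Set.mem_insert_of_mem _ (Set.mem_insert_of_mem _ rfl))

lemma eIdem_mem_Cher (i : Fin l) : eIdem l ζ i ∈ Cher l ζ κ :=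
  Subalgebra.smul_mem _ (Subalgebra.sum_mem _ fun j _ =>
    Subalgebra.smul_mem _ (Subalgebra.pow_mem _ (Gam_mem_Cher ζ κ) j) _) _

lemma eulerOp_mem_Cher : eulerOp l ζ κ ∈ Cher l ζ κ :=
  Subalgebra.sub_mem _ (Subalgebra.mul_mem _ (Zmul_mem_Cher ζ κ) (Dunkl_mem_Cher ζ κ))
    (Subalgebra.smul_mem _ (Subalgebra.sum_mem _ fun i _ =>
      Subalgebra.smul_mem _ (eIdem_mem_Cher ζ κ i) _) _)

end CherednikGenerators

section CherednikAlgebra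

open Polynomial

variable (l : ℕ) [NeZero l]

def residue (m : ℤ) : Fin l :=
  ⟨(m % l).toNat, by
    have := Int.emod_lt_of_pos m (Int.natCast_pos.2 (NeZero.pos l))
    have := Int.emod_nonneg m (Int.natCast_ne_zero.2 (NeZero.ne l))
    omega⟩

variable {l}

lemma residue_eq_residue_iff {m m' : ℤ} : residue l m = residue l m' ↔ m ≡ m' [ZMOD l] := by
  have := Int.emod_nonneg m (Int.natCast_ne_zero.2 (NeZero.ne l))
  have := Int.emod_nonneg m' (Int.natCast_ne_zero.2 (NeZero.ne l))
  rw [Fin.ext_iff, Int.ModEq]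
  simp only [residue]
  omega

lemma residue_natCast_val (i : Fin l) : residue l ((i : ℕ) : ℤ) = i :=
  Fin.ext (by simp [residue, Int.emod_eq_of_lt (Int.natCast_nonneg _) (Int.ofNat_lt.2 i.2)])

lemma residue_eq_iff {m : ℤ} {i : Fin l} : residue l m = i ↔ m ≡ (i : ℕ) [ZMOD l] := by
  rw [← residue_eq_residue_iff, residue_natCast_val]

lemma residue_add_eq_zero_iff {n m : ℤ} {i : Fin l} (hm : m + (i : ℕ) ≡ 0 [ZMOD l]) :
    residue l (n + m) = 0 ↔ residue l n = i := by
  rw [residue_eq_iff, residue_eq_iff, Int.modEq_iff_dvd, Int.modEq_iff_dvd]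
  rw [Int.modEq_iff_dvd] at hm
  rw [Fin.val_zero, Nat.cast_zero, ← dvd_sub_left hm]
  ring_nf

variable {ζ : ℂ}

/-- `e_i zⁿ = (1/l) ∑ⱼ (ζ^{i-n})ʲ zⁿ` is a full or a vanishing geometric sum. -/
lemma eIdem_T (hζ : IsPrimitiveRoot ζ l) (i : Fin l) (n : ℤ) :
    eIdem l ζ i (T n) = if residue l n = i then T n else 0 := by
  set η := ζ ^ ((i : ℕ) - n : ℤ)
  have hη : ζ ^ (i : ℕ) * ζ⁻¹ ^ n = η := by
    rw [inv_zpow', ← zpow_natCast, ← zpow_add₀ (hζ.ne_zero (NeZero.ne l)), ← sub_eq_add_neg]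
  have hterm (j : ℕ) : (ζ ^ ((i : ℕ) * j) • Gam ζ ^ j) (T n) = η ^ j • T n := by
    rw [LinearMap.smul_apply, ← aeval_X_pow (R := ℂ) (x := Gam ζ),
      Module.End.aeval_apply_of_mem_apply_eq_smul (Gam_T ζ n), eval_X_pow, smul_smul, pow_mul,
      ← mul_pow, hη]
  have hη_one : η = 1 ↔ residue l n = i := by
    rw [hζ.zpow_eq_one_iff_dvd, residue_eq_iff, Int.modEq_iff_dvd]
  rw [eIdem, LinearMap.smul_apply, LinearMap.sum_apply, Finset.sum_congr rfl fun j _ => hterm j,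
    ← Finset.sum_smul, smul_smul]
  split_ifs with h
  · rw [hη_one.2 h]
    simp [NeZero.ne l]
  · have hη_pow : η ^ l = 1 := by
      rw [← zpow_natCast, ← zpow_mul, hζ.zpow_eq_one_iff_dvd]
      exact dvd_mul_left _ _
    rw [geom_sum_eq (mt hη_one.1 h), hη_pow, sub_self, zero_div, mul_zero, zero_smul]

lemma sum_smul_eIdem_T (hζ : IsPrimitiveRoot ζ l) (c : Fin l → ℂ) (n : ℤ) :
    (∑ i, c i • eIdem l ζ i) (T n) = c (residue l n) • T n := by
  simp only [LinearMap.sum_apply, LinearMap.smul_apply, eIdem_T hζ, smul_ite, smul_zero,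
    Finset.sum_ite_eq, Finset.mem_univ, if_true]

lemma sum_eIdem (hζ : IsPrimitiveRoot ζ l) : ∑ i, eIdem l ζ i = 1 :=
  linearMap_ext_T fun n => by simpa using sum_smul_eIdem_T hζ 1 n

lemma eIdem_mul_self (hζ : IsPrimitiveRoot ζ l) (i : Fin l) :
    eIdem l ζ i * eIdem l ζ i = eIdem l ζ i :=
  linearMap_ext_T fun n => by by_cases h : residue l n = i <;> simp [eIdem_T hζ, h]

variable (κ : Fin l → ℂ)

def dunklCoeff (m : ℤ) : ℂ := m + l * κ (residue l m)

lemma Dunkl_T (hζ : IsPrimitiveRoot ζ l) (n : ℤ) :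
    Dunkl l ζ κ (T n) = dunklCoeff κ n • T (n - 1) := by
  rw [Dunkl, LinearMap.add_apply, Deriv_T, LinearMap.smul_apply, Module.End.mul_apply,
    sum_smul_eIdem_T hζ, map_smul, Zinv_T, smul_smul, ← add_smul, dunklCoeff]

lemma Dunkl_pow_T (hζ : IsPrimitiveRoot ζ l) (k : ℕ) (m : ℤ) :
    (Dunkl l ζ κ ^ k) (T (m + k)) =
      (∏ s ∈ Finset.range k, dunklCoeff κ (m + (s + 1 : ℕ))) • T m := by
  induction k generalizing m with
  | zero => simp
  | succ k ih =>
    rw [pow_succ', Module.End.mul_apply, Nat.cast_succ, ← add_assoc, add_right_comm, ih,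
      map_smul, Dunkl_T κ hζ, add_sub_cancel_right, smul_smul, Finset.prod_range_succ']
    congr 2
    refine Finset.prod_congr rfl fun s _ => congrArg (dunklCoeff κ) ?_
    push_cast
    ring

lemma eulerOp_T (hζ : IsPrimitiveRoot ζ l) (n : ℤ) : eulerOp l ζ κ (T n) = (n : ℂ) • T n := by
  rw [eulerOp, LinearMap.sub_apply, Module.End.mul_apply, Dunkl_T κ hζ, map_smul, Zmul_T,
    sub_add_cancel, LinearMap.smul_apply, sum_smul_eIdem_T hζ, smul_smul, ← sub_smul, dunklCoeff,
    add_sub_cancel_right]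

lemma aeval_eulerOp_T (hζ : IsPrimitiveRoot ζ l) (p : ℂ[X]) (n : ℤ) :
    aeval (eulerOp l ζ κ) p (T n) = p.eval (n : ℂ) • T n :=
  Module.End.aeval_apply_of_mem_apply_eq_smul (eulerOp_T κ hζ n)

/-- On `e_i L`, `zⁱ e₀ ∂ⁱ` and `∂^{l-i} e₀ z^{l-i}` act as polynomials in the Euler operator
whose roots are the `dunklRoot κ i t` with `0 < t ≤ i` and with `i < t ≤ l` respectively. -/
def dunklRoot (i t : ℕ) : ℂ := i - t - l * κ (residue l t)

lemma dunklCoeff_eq_eval {n : ℤ} {i : Fin l} (h : residue l n = i) (t : ℕ) :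
    dunklCoeff κ (n - (i : ℕ) + t) = (X - Polynomial.C (dunklRoot κ i t)).eval (n : ℂ) := by
  have hres : residue l (n - (i : ℕ) + t) = residue l t := by
    rw [residue_eq_residue_iff]
    simpa using ((residue_eq_iff.1 h).sub_right ((i : ℕ) : ℤ)).add_right (t : ℤ)
  rw [dunklCoeff, hres, dunklRoot, eval_sub, eval_X, eval_C]
  push_cast
  ring

def lowerDunklPoly (i : ℕ) : ℂ[X] :=
  ∏ s ∈ Finset.range i, (X - Polynomial.C (dunklRoot κ i (s + 1)))

def upperDunklPoly (i : ℕ) : ℂ[X] :=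
  ∏ s ∈ Finset.range (l - i), (X - Polynomial.C (dunklRoot κ i (i + 1 + s)))

lemma Zmul_pow_mul_eIdem_mul_Dunkl_pow (hζ : IsPrimitiveRoot ζ l) (i : Fin l) :
    Zmul ^ (i : ℕ) * eIdem l ζ 0 * Dunkl l ζ κ ^ (i : ℕ) =
      aeval (eulerOp l ζ κ) (lowerDunklPoly κ i) * eIdem l ζ i := by
  refine linearMap_ext_T fun n => ?_
  have hres : residue l (n - (i : ℕ)) = 0 ↔ residue l n = i := by
    rw [sub_eq_add_neg]
    exact residue_add_eq_zero_iff (by rw [neg_add_cancel])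
  conv_lhs => rw [← sub_add_cancel n ((i : ℕ) : ℤ)]
  simp only [Module.End.mul_apply, Dunkl_pow_T κ hζ, map_smul, eIdem_T hζ]
  by_cases h : residue l n = i
  · rw [if_pos (hres.2 h), if_pos h, Zmul_pow_T, sub_add_cancel, aeval_eulerOp_T κ hζ,
      lowerDunklPoly, eval_prod]
    exact congrArg (· • T n) (Finset.prod_congr rfl fun s _ => dunklCoeff_eq_eval κ h (s + 1))
  · rw [if_neg (mt hres.1 h), if_neg h, map_zero, smul_zero, map_zero]

lemma Dunkl_pow_mul_eIdem_mul_Zmul_pow (hζ : IsPrimitiveRoot ζ l) (i : Fin l) :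
    Dunkl l ζ κ ^ (l - i) * eIdem l ζ 0 * Zmul ^ (l - i) =
      aeval (eulerOp l ζ κ) (upperDunklPoly κ i) * eIdem l ζ i := by
  refine linearMap_ext_T fun n => ?_
  have hres : residue l (n + (l - i : ℕ)) = 0 ↔ residue l n = i :=
    residue_add_eq_zero_iff (by rw [Int.ModEq, Nat.cast_sub i.2.le, sub_add_cancel, Int.emod_self,
      Int.zero_emod])
  simp only [Module.End.mul_apply, Zmul_pow_T, eIdem_T hζ]
  by_cases h : residue l n = i
  · rw [if_pos (hres.2 h), Dunkl_pow_T κ hζ, if_pos h, aeval_eulerOp_T κ hζ, upperDunklPoly,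
      eval_prod]
    refine congrArg (· • T n) (Finset.prod_congr rfl fun s _ => ?_)
    rw [← dunklCoeff_eq_eval κ h]
    congr 1
    push_cast
    ring
  · rw [if_neg (mt hres.1 h), if_neg h, map_zero, map_zero]

lemma apply_residue_natCast (hκ0 : κ 0 = 0) {t : ℕ} (ht : t ≤ l) :
    κ (residue l t) = if h : t < l then κ ⟨t, h⟩ else 0 := by
  split_ifs with h
  · rw [residue_natCast_val ⟨t, h⟩]
  · rw [show t = l by omega, show residue l l = 0 from Fin.ext (by simp [residue]), hκ0]

lemma isCoprime_lowerDunklPoly_upperDunklPoly (hκ0 : κ 0 = 0)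
    (hreg : ∀ i j : ℕ, 0 < i → i < j → j ≤ l →
      (if hi : i < l then κ ⟨i, hi⟩ else 0) - (if hj : j < l then κ ⟨j, hj⟩ else 0) ≠
        ((j : ℂ) - (i : ℂ)) / (l : ℂ)) (i : Fin l) :
    IsCoprime (lowerDunklPoly κ i) (upperDunklPoly κ i) := by
  refine IsCoprime.prod_left fun s hs => IsCoprime.prod_right fun s' hs' =>
    isCoprime_X_sub_C_of_isUnit_sub (isUnit_iff_ne_zero.2 (sub_ne_zero.2 ?_))
  rw [Finset.mem_range] at hs hs'
  have hreg' := hreg (s + 1) (i + 1 + s') (by omega) (by omega) (by omega)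
  rw [← apply_residue_natCast κ hκ0 (by omega), ← apply_residue_natCast κ hκ0 (by omega)] at hreg'
  intro heq
  apply hreg'
  rw [dunklRoot, dunklRoot] at heq
  have hl : (l : ℂ) ≠ 0 := Nat.cast_ne_zero.2 (NeZero.ne l)
  field_simp
  push_cast at heq ⊢
  linear_combination -heq

lemma sum_aeval_eulerOp_mul_eq_one (hζ : IsPrimitiveRoot ζ l) {u v : Fin l → ℂ[X]}
    (huv : ∀ i, u i * lowerDunklPoly κ i + v i * upperDunklPoly κ i = 1) :
    ∑ i : Fin l,
      (aeval (eulerOp l ζ κ) (u i) * Zmul ^ (i : ℕ) * eIdem l ζ 0 * Dunkl l ζ κ ^ (i : ℕ) +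
        aeval (eulerOp l ζ κ) (v i) * Dunkl l ζ κ ^ (l - i) * eIdem l ζ 0 * Zmul ^ (l - i)) =
      1 := by
  simp only [mul_assoc]
  simp only [← mul_assoc (Zmul ^ _), ← mul_assoc (Dunkl l ζ κ ^ _),
    Zmul_pow_mul_eIdem_mul_Dunkl_pow κ hζ, Dunkl_pow_mul_eIdem_mul_Zmul_pow κ hζ, ← mul_assoc,
    ← map_mul, ← add_mul, ← map_add, huv, map_one, one_mul, sum_eIdem hζ]

lemma one_mem_span_eIdem_zero (hζ : IsPrimitiveRoot ζ l) (hκ0 : κ 0 = 0)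
    (hreg : ∀ i j : ℕ, 0 < i → i < j → j ≤ l →
      (if hi : i < l then κ ⟨i, hi⟩ else 0) - (if hj : j < l then κ ⟨j, hj⟩ else 0) ≠
        ((j : ℂ) - (i : ℂ)) / (l : ℂ)) :
    (1 : Cher l ζ κ) ∈ TwoSidedIdeal.span {⟨eIdem l ζ 0, eIdem_mem_Cher ζ κ 0⟩} := by
  choose u v huv using isCoprime_lowerDunklPoly_upperDunklPoly κ hκ0 hreg
  let E : Cher l ζ κ := ⟨eulerOp l ζ κ, eulerOp_mem_Cher ζ κ⟩
  let Z : Cher l ζ κ := ⟨Zmul, Zmul_mem_Cher ζ κ⟩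
  let D : Cher l ζ κ := ⟨Dunkl l ζ κ, Dunkl_mem_Cher ζ κ⟩
  let e : Cher l ζ κ := ⟨eIdem l ζ 0, eIdem_mem_Cher ζ κ 0⟩
  have hsum : ∑ i : Fin l, (aeval E (u i) * Z ^ (i : ℕ) * e * D ^ (i : ℕ) +
      aeval E (v i) * D ^ (l - i) * e * Z ^ (l - i)) = 1 := Subtype.ext <| by
    simpa [E, Z, D, e, aeval_subalgebra_coe] using sum_aeval_eulerOp_mul_eq_one κ hζ huv
  rw [← hsum]
  refine TwoSidedIdeal.finsetSum_mem _ _ _ fun i _ => add_mem ?_ ?_ <;>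
    exact TwoSidedIdeal.mul_mem_right _ _ _
      (TwoSidedIdeal.mul_mem_left _ _ _ (TwoSidedIdeal.subset_span rfl))

end CherednikAlgebra

/-- Lemma 13: Morita equivalence of the rational Cherednik algebra `H_κ` of type `ℤ/lℤ`
with its spherical subalgebra `e_0 H_κ e_0`.  Setting `κ_l = 0`, assume
`κ_i − κ_j ≠ (j−i)/l` for all integers `0 < i < j ≤ l` (equivalently
`c_i + ⋯ + c_{j−1} ≠ 0` where `c_i = κ_i − κ_{i+1} − 1/l + δ_{i,0}`).  Then
`e_0 H_κ e_0 = {e_0 h e_0 : h ∈ H_κ}` is a ring with multiplicative identity `e_0`, and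
the functor `M ↦ e_0·M` from left `H_κ`-modules to left `e_0 H_κ e_0`-modules is an
equivalence of categories; in particular `H_κ` and `e_0 H_κ e_0` are Morita equivalent. -/
theorem morita_equivalence_spherical (l : ℕ) [NeZero l] (ζ : ℂ)
    (hζ : ζ = Complex.exp (2 * Real.pi * Complex.I / l))
    (κ : Fin l → ℂ) (hκ0 : κ 0 = 0)
    (hreg : ∀ i j : ℕ, 0 < i → i < j → j ≤ l →
      (if hi : i < l then κ ⟨i, hi⟩ else 0) - (if hj : j < l then κ ⟨j, hj⟩ else 0) ≠
        ((j : ℂ) - (i : ℂ)) / (l : ℂ)) :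
    ∃ (he0 : eIdem l ζ 0 ∈ Cher l ζ κ)
      (hε : Fact (IsIdempotentElem (⟨eIdem l ζ 0, he0⟩ : ↥(Cher l ζ κ)))),
      ((1 : ↥(cornerSubring (⟨eIdem l ζ 0, he0⟩ : ↥(Cher l ζ κ)))) : ↥(Cher l ζ κ)) =
          ⟨eIdem l ζ 0, he0⟩ ∧
      (cornerFunctor (⟨eIdem l ζ 0, he0⟩ : ↥(Cher l ζ κ))).IsEquivalence := by
  have hζ' : IsPrimitiveRoot ζ l := hζ ▸ Complex.isPrimitiveRoot_exp l (NeZero.ne l)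
  have hidem : Fact (IsIdempotentElem (⟨eIdem l ζ 0, eIdem_mem_Cher ζ κ 0⟩ : ↥(Cher l ζ κ))) :=
    ⟨Subtype.ext (eIdem_mul_self hζ' 0)⟩
  refine ⟨eIdem_mem_Cher ζ κ 0, hidem, rfl, cornerFunctor_isEquivalence _ ?_⟩
  exact (TwoSidedIdeal.one_mem_iff _).1 (one_mem_span_eIdem_zero κ hζ' hκ0 hreg)
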